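/- Let S be an n-dimensional simplex with vertices v_0,...,v_n, outward facet normals h_0,...,h_n, and let h_0 = -γ_1 h_1 - ... - γ_n h_n with γ_i > 0. Fix λ ∈ (0,1) and set v' = λ v_1 + (1-λ) v_0. Consider the simplex S^1 = co{v', v_1, ..., v_n} with exit facet F_0' = co{v', v_2, ..., v_n}. Then h' := γ_1(1-λ) h_1 - λ h_0 is a (non-normalized) normal vector to F_0' pointing out of S^1, i.e., h' is orthogonal to the affine hull of {v', v_2, ..., v_n} and h'·(v_1 - v') < 0. -/

import Mathlib

/-- With `h 0 = -∑_{i≥1} γ i • h i` (γ i > 0), λ ∈ (0,1),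
`v' = λ v 1 + (1-λ) v 0`, the vector `h' = γ 1 (1-λ) h 1 - λ h 0` is a normal to the
new exit facet `F₀' = co{v', v 2, …, v n}` pointing out of `S¹ = co{v', v 1, …, v n}`:
it is orthogonal to `v i - v'` for all `i ≥ 2` and satisfies `⟪h', v 1 - v'⟫ < 0`. -/
theorem stmt_1 (n : ℕ) (hn : 2 ≤ n)
    (v : Fin (n + 1) → EuclideanSpace ℝ (Fin n))
    (hv : AffineIndependent ℝ v)
    (h : Fin (n + 1) → EuclideanSpace ℝ (Fin n))
    (c : Fin (n + 1) → ℝ)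
    (hnorm : ∀ j, ‖h j‖ = 1)
    (hfacet : ∀ j i, i ≠ j → (inner ℝ (h j) (v i) : ℝ) = c j)
    (hout : ∀ j, (inner ℝ (h j) (v j) : ℝ) < c j)
    (γ : Fin (n + 1) → ℝ)
    (hγpos : ∀ i, i ≠ 0 → 0 < γ i)
    (hγ : h 0 = -∑ i ∈ Finset.univ.filter (· ≠ (0 : Fin (n + 1))), γ i • h i)
    (lam : ℝ) (hlam : lam ∈ Set.Ioo (0 : ℝ) 1)
    (v' : EuclideanSpace ℝ (Fin n))
    (hv' : v' = lam • v 1 + (1 - lam) • v 0)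
    (h' : EuclideanSpace ℝ (Fin n))
    (hh' : h' = (γ 1 * (1 - lam)) • h 1 - lam • h 0) :
    (∀ i : Fin (n + 1), i ≠ 0 → i ≠ 1 → (inner ℝ h' (v i - v') : ℝ) = 0) ∧
      (inner ℝ h' (v 1 - v') : ℝ) < 0 := by
  obtain ⟨hl0, hl1⟩ := hlam
  have h01 : (0 : Fin (n + 1)) ≠ 1 := by
    intro hcon
    have := congrArg Fin.val hcon
    simp [Fin.val_one, Nat.mod_eq_of_lt (by omega : 1 < n + 1)] at this
  have e10 : (inner ℝ (h 1) (v 0) : ℝ) = c 1 := hfacet 1 0 h01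
  have e01 : (inner ℝ (h 0) (v 1) : ℝ) = c 0 := hfacet 0 1 h01.symm
  have hA : (inner ℝ (h 1) (v 1) : ℝ) < c 1 := hout 1
  have hB : (inner ℝ (h 0) (v 0) : ℝ) < c 0 := hout 0
  have hγ1 : 0 < γ 1 := hγpos 1 h01.symm
  set w : EuclideanSpace ℝ (Fin n) := v 1 - v 0 with hw
  have hw1 : (inner ℝ (h 1) w : ℝ) = inner ℝ (h 1) (v 1) - c 1 := by
    rw [hw, inner_sub_right, e10]
  have hone : (1 : Fin (n + 1)) ∈ Finset.univ.filter (· ≠ (0 : Fin (n + 1))) :=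
    Finset.mem_filter.mpr ⟨Finset.mem_univ _, h01.symm⟩
  have hterm : ∀ i ∈ Finset.univ.filter (· ≠ (0 : Fin (n + 1))), i ≠ 1 →
      (inner ℝ (γ i • h i) w : ℝ) = 0 := by
    intro i hi hi1
    simp only [Finset.mem_filter] at hi
    have hz : (inner ℝ (h i) w : ℝ) = 0 := by
      rw [hw, inner_sub_right, hfacet i 1 hi1.symm, hfacet i 0 hi.2.symm, sub_self]
    rw [real_inner_smul_left, hz, mul_zero]
  have hsum : (inner ℝ (h 0) w : ℝ) = -(γ 1 * (inner ℝ (h 1) w : ℝ)) := by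
    rw [hγ, inner_neg_left, sum_inner, Finset.sum_eq_single_of_mem _ hone hterm,
      real_inner_smul_left]
  have hw0 : (inner ℝ (h 0) w : ℝ) = c 0 - inner ℝ (h 0) (v 0) := by
    rw [hw, inner_sub_right, e01]
  have key : c 0 - (inner ℝ (h 0) (v 0) : ℝ) = γ 1 * ((c 1 : ℝ) - inner ℝ (h 1) (v 1)) := by
    rw [← hw0, hsum, hw1]; ring
  have hmain : (inner ℝ h' w : ℝ) = γ 1 * ((inner ℝ (h 1) (v 1) : ℝ) - c 1) := by
    rw [hh', inner_sub_left, real_inner_smul_left, real_inner_smul_left, hsum, hw1]; ring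
  constructor
  · intro i hi0 hi1
    have hiv : (inner ℝ h' (v i - v 0) : ℝ) = -(lam * (c 0 - inner ℝ (h 0) (v 0))) := by
      rw [hh', inner_sub_left, real_inner_smul_left, real_inner_smul_left,
        inner_sub_right, inner_sub_right, hfacet 1 i hi1, hfacet 0 i hi0, e10]
      ring
    have hd : v i - v' = (v i - v 0) - lam • w := by
      rw [hv', hw]; module
    rw [hd, inner_sub_right, real_inner_smul_right, hiv, hmain]
    linear_combination (-lam) * key
  · have hd : v 1 - v' = (1 - lam) • w := by
      rw [hv', hw]; module
    rw [hd, real_inner_smul_right, hmain]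
    have h1l : 0 < 1 - lam := by linarith
    exact mul_neg_of_pos_of_neg h1l (mul_neg_of_pos_of_neg hγ1 (by linarith))
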